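/- arXiv:math/0009123 — 3 statements merged into one kernel-verified Lean document; each statement's English description precedes it below -/
import Mathlib

section
/- Let F be a field, G a group, and V a finite-dimensional F-vector space equipped with a linear representation of G with dim_F(V) > 1. If the G-module V is very simple, then V is not isomorphic to a tensor product of two G-modules of strictly smaller dimension; that is, there do not exist finite-dimensional G-modules V₁ and V₂ over F with dim_F(V₁) < dim_F(V) and dim_F(V₂) < dim_F(V) such that V is isomorphic as a G-module to V₁ ⊗_F V₂ (with G acting diagonally on the tensor product). -/
/-! If `V ≅ V₁ ⊗ V₂` equivariantly, the image of `End V₁ ⊗ 1` in `End V` is a subalgebra stable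
under conjugation by `G`, of dimension `(dim V₁)²` because `V₂ ≠ 0`. It is neither `F·Id`, since
`dim V₁ > 1`, nor `End V`, since `dim V₁ < dim V₁ · dim V₂ = dim V`. -/

open TensorProduct

/-- A `G`-module `V` over a field `F` is *very simple* if every `F`-subalgebra
`R ⊆ End_F(V)` (containing the identity) with `ρ(σ) R ρ(σ)⁻¹ ⊆ R` for all `σ ∈ G`
satisfies `R = F·Id` or `R = End_F(V)`. -/
def VerySimple (F : Type) [Field F] {G V : Type} [Group G] [AddCommGroup V] [Module F V]
    (ρ : Representation F G V) : Prop :=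
  ∀ R : Subalgebra F (Module.End F V),
    (∀ σ : G, ∀ r ∈ R, ρ σ * r * ρ σ⁻¹ ∈ R) → R = ⊥ ∨ R = ⊤

namespace Representation

variable {k G V W : Type*} [CommRing k] [Group G] [AddCommGroup V] [Module k V]
  [AddCommGroup W] [Module k W]

theorem tprod_mul_rTensor_mul_tprod_inv (ρ : Representation k G V) (σ : Representation k G W)
    (g : G) (f : Module.End k V) :
    ρ.tprod σ g * f.rTensor W * ρ.tprod σ g⁻¹ = (ρ g * f * ρ g⁻¹).rTensor W := by
  rw [tprod_apply, tprod_apply, LinearMap.rTensor, LinearMap.rTensor, ← TensorProduct.map_mul,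
    ← TensorProduct.map_mul, ← Module.End.one_eq_id, mul_one, ← map_mul, mul_inv_cancel, map_one]

end Representation

theorem Module.End.rTensorAlgHom_injective (F V W : Type*) [Field F] [AddCommGroup V]
    [Module F V] [AddCommGroup W] [Module F W] [Nontrivial W] :
    Function.Injective (Module.End.rTensorAlgHom F V W) :=
  (injective_iff_map_eq_zero _).2 fun f hf ↦
    (Module.FaithfullyFlat.zero_iff_rTensor_zero F W f).2 hf

namespace VerySimple

variable {F G V W : Type} [Field F] [Group G] [AddCommGroup V] [Module F V]
  [AddCommGroup W] [Module F W]

theorem of_linearEquiv {ρ : Representation F G V} {σ : Representation F G W}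
    (h : VerySimple F ρ) (e : V ≃ₗ[F] W) (he : ∀ (g : G) (v : V), e (ρ g v) = σ g (e v)) :
    VerySimple F σ := by
  set c := (e.conjAlgEquiv F).toAlgHom
  have hc : ∀ g, c (ρ g) = σ g := fun g ↦ by ext w; simp [c, he]
  have hsurj : Function.Surjective c := (e.conjAlgEquiv F).surjective
  intro R hR
  have hstable : ∀ g, ∀ r ∈ R.comap c, ρ g * r * ρ g⁻¹ ∈ R.comap c := fun g r hr ↦ by
    simpa only [Subalgebra.mem_comap, map_mul, hc] using hR g (c r) hr
  rw [← Subalgebra.map_comap_eq_self_of_surjective hsurj R]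
  rcases h _ hstable with hbot | htop
  · exact .inl (hbot ▸ Algebra.map_bot c)
  · exact .inr (htop ▸ (Algebra.map_top c).trans ((AlgHom.range_eq_top c).2 hsurj))

end VerySimple

theorem not_verySimple_tprod {F G V W : Type} [Field F] [Group G] [AddCommGroup V] [Module F V]
    [AddCommGroup W] [Module F W] [FiniteDimensional F V] [FiniteDimensional F W]
    (ρ : Representation F G V) (σ : Representation F G W)
    (hV : 1 < Module.finrank F V) (hW : 1 < Module.finrank F W) :
    ¬ VerySimple F (ρ.tprod σ) := by
  intro h
  have : Nontrivial V := Module.nontrivial_of_finrank_pos (R := F) (by omega)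
  have : Nontrivial W := Module.nontrivial_of_finrank_pos (R := F) (by omega)
  set R := (Module.End.rTensorAlgHom F V W).range
  have hstable : ∀ g, ∀ r ∈ R, ρ.tprod σ g * r * ρ.tprod σ g⁻¹ ∈ R := by
    rintro g _ ⟨f, rfl⟩
    exact ⟨ρ g * f * ρ g⁻¹, (ρ.tprod_mul_rTensor_mul_tprod_inv σ g f).symm⟩
  have hR : Module.finrank F R = Module.finrank F V * Module.finrank F V := by
    rw [← Module.finrank_linearMap]
    exact LinearMap.finrank_range_of_inj (Module.End.rTensorAlgHom_injective F V W)
  rcases h R hstable with hbot | htop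
  · rw [hbot, Subalgebra.finrank_bot] at hR
    nlinarith
  · rw [htop, Subalgebra.topEquiv.toLinearEquiv.finrank_eq, Module.finrank_linearMap,
      Module.finrank_tensorProduct] at hR
    have : Module.finrank F V < Module.finrank F V * Module.finrank F W := by nlinarith
    nlinarith [Nat.mul_lt_mul'' this this]

theorem verySimple_not_tensor_decomposable_general
    (F : Type) [Field F] (G : Type) [Group G] (V : Type) [AddCommGroup V] [Module F V]
    (ρ : Representation F G V) (h : VerySimple F ρ) :
    ∀ (V₁ V₂ : Type) [AddCommGroup V₁] [AddCommGroup V₂] [Module F V₁] [Module F V₂]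
      [FiniteDimensional F V₁] [FiniteDimensional F V₂]
      (ρ₁ : Representation F G V₁) (ρ₂ : Representation F G V₂),
      Module.finrank F V₁ < Module.finrank F V →
      Module.finrank F V₂ < Module.finrank F V →
      ∀ e : V ≃ₗ[F] (V₁ ⊗[F] V₂),
        ¬ (∀ (g : G) (v : V), e (ρ g v) = (ρ₁.tprod ρ₂) g (e v)) := by
  intro V₁ V₂ _ _ _ _ _ _ ρ₁ ρ₂ h₁ h₂ e he
  have hV : Module.finrank F V = Module.finrank F V₁ * Module.finrank F V₂ := by
    rw [e.finrank_eq, Module.finrank_tensorProduct]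
  refine not_verySimple_tprod ρ₁ ρ₂ ?_ ?_ (h.of_linearEquiv e he)
  · exact Nat.lt_of_mul_lt_mul_right (a := Module.finrank F V₂) (by omega)
  · exact Nat.lt_of_mul_lt_mul_left (a := Module.finrank F V₁) (by omega)

/-- a very simple module `V` with `dim_F V > 1` is not isomorphic (as a
`G`-module) to a tensor product of two `G`-modules of strictly smaller dimension. -/
theorem verySimple_not_tensor_decomposable
    (F : Type) [Field F] (G : Type) [Group G] (V : Type) [AddCommGroup V] [Module F V]
    [FiniteDimensional F V] (ρ : Representation F G V)
    (hdim : 1 < Module.finrank F V) (h : VerySimple F ρ) :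
    ∀ (V₁ V₂ : Type) [AddCommGroup V₁] [AddCommGroup V₂] [Module F V₁] [Module F V₂]
      [FiniteDimensional F V₁] [FiniteDimensional F V₂]
      (ρ₁ : Representation F G V₁) (ρ₂ : Representation F G V₂),
      Module.finrank F V₁ < Module.finrank F V →
      Module.finrank F V₂ < Module.finrank F V →
      ∀ e : V ≃ₗ[F] (V₁ ⊗[F] V₂),
        ¬ (∀ (g : G) (v : V), e (ρ g v) = (ρ₁.tprod ρ₂) g (e v)) :=
  verySimple_not_tensor_decomposable_general F G V ρ h
end

section
/- Let g be a positive integer and let Z be a subgroup of the symplectic group Sp_{2g}(ℚ₂) (the group of invertible 2g × 2g matrices over the 2-adic numbers ℚ₂ preserving the standard nondegenerate alternating bilinear form) such that every element of Z has order dividing 2. Then Z is a finite elementary abelian 2-group of order at most 2^g. -/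
/-!
A group of exponent `2` is abelian, and one acting faithfully by isometries of a nondegenerate
alternating form in dimension `n` (over a field where `2 ≠ 0`) has order at most `2 ^ (n / 2)`.
Induct on invariant subspaces `W` on which the form is nondegenerate, counting the distinct
restrictions of the group to `W`. If some element `s` is not `±1` on `W`, then `W` is the direct
sum of the `±1`-eigenspaces of `s` in it; these are invariant since the group is abelian, and
orthogonal since `s` is an isometry, so the form stays nondegenerate on both and the counts
multiply. Otherwise every element is `±1` on `W`, leaving at most two restrictions, while a
nonzero nondegenerate alternating space has dimension at least `2`. For `Sp_{2g}` the form is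
the standard one, given by `J`, and `n = 2g`.
-/

open Module Module.End Set

theorem Set.encard_image_le_encard_image_mul {α β γ δ : Type*} {f : α → β} {g : α → γ}
    {h : α → δ} {s : Set α} (hf : ∀ a ∈ s, ∀ b ∈ s, g a = g b → h a = h b → f a = f b) :
    (f '' s).encard ≤ (g '' s).encard * (h '' s).encard := by
  obtain rfl | ⟨a₀, -⟩ := s.eq_empty_or_nonempty
  · simp
  have : Nonempty α := ⟨a₀⟩
  let gh : α → γ × δ := fun a => (g a, h a)
  have hsub : f '' s ⊆ (fun p => f (Function.invFunOn gh s p)) '' ((g '' s) ×ˢ (h '' s)) := by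
    rintro _ ⟨a, ha, rfl⟩
    obtain ⟨hmem, heq⟩ := Function.invFunOn_pos (f := gh) ⟨a, ha, rfl⟩
    exact ⟨gh a, ⟨mem_image_of_mem g ha, mem_image_of_mem h ha⟩,
      hf _ hmem a ha (congrArg Prod.fst heq) (congrArg Prod.snd heq)⟩
  calc (f '' s).encard ≤ _ := encard_le_encard hsub
    _ ≤ ((g '' s) ×ˢ (h '' s)).encard := encard_image_le _ _
    _ = _ := encard_prod

theorem neg_one_ne_one_of_neZero_two {R : Type*} [Ring R] [NeZero (2 : R)] : (-1 : R) ≠ 1 :=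
  fun h => (two_ne_zero : (2 : R) ≠ 0) <| by
    rw [← one_add_one_eq_two]; nth_rw 1 [← h]; exact neg_add_cancel 1

variable {K V : Type*} [Field K] [AddCommGroup V] [Module K V]

namespace Module.End

theorem inf_eigenspace_one_sup_inf_eigenspace_neg_one [NeZero (2 : K)] {s : End K V}
    (hs : s * s = 1) {W : Submodule K V} (hW : MapsTo s W W) :
    W ⊓ s.eigenspace 1 ⊔ W ⊓ s.eigenspace (-1) = W := by
  refine le_antisymm (sup_le inf_le_left inf_le_left) fun w hw => ?_
  have hss : ∀ v, s (s v) = v := fun v => LinearMap.congr_fun hs v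
  have hplus : (2 : K)⁻¹ • (w + s w) ∈ W ⊓ s.eigenspace 1 :=
    Submodule.mem_inf.mpr ⟨W.smul_mem _ (W.add_mem hw (hW hw)), by
      rw [mem_eigenspace_iff, map_smul, map_add, hss, add_comm, one_smul]⟩
  have hminus : (2 : K)⁻¹ • (w - s w) ∈ W ⊓ s.eigenspace (-1) :=
    Submodule.mem_inf.mpr ⟨W.smul_mem _ (W.sub_mem hw (hW hw)), by
      rw [mem_eigenspace_iff, map_smul, map_sub, hss, neg_one_smul, ← smul_neg, neg_sub]⟩
  convert Submodule.add_mem_sup hplus hminus using 1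
  rw [← smul_add, add_add_sub_cancel, ← two_smul K, smul_smul, inv_mul_cancel₀ two_ne_zero,
    one_smul]

theorem disjoint_eigenspace_one_neg_one [NeZero (2 : K)] (s : End K V) :
    Disjoint (s.eigenspace 1) (s.eigenspace (-1)) :=
  s.disjoint_genEigenspace neg_one_ne_one_of_neZero_two.symm 1 1

theorem finrank_inf_eigenspace_one_add_finrank_inf_eigenspace_neg_one [NeZero (2 : K)]
    [FiniteDimensional K V] {s : End K V} (hs : s * s = 1) {W : Submodule K V}
    (hW : MapsTo s W W) :
    finrank K ↥(W ⊓ s.eigenspace 1) + finrank K ↥(W ⊓ s.eigenspace (-1)) = finrank K W := by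
  have hdisj : Disjoint (W ⊓ s.eigenspace 1) (W ⊓ s.eigenspace (-1)) :=
    (disjoint_eigenspace_one_neg_one s).mono inf_le_right inf_le_right
  rw [← Submodule.finrank_sup_add_finrank_inf_eq, hdisj.eq_bot, finrank_bot, add_zero,
    inf_eigenspace_one_sup_inf_eigenspace_neg_one hs hW]

theorem mapsTo_inf_eigenspace_of_comm {s t : End K V} (hst : Commute s t) {W : Submodule K V}
    (hW : MapsTo t W W) (μ : K) : MapsTo t ↑(W ⊓ s.eigenspace μ) ↑(W ⊓ s.eigenspace μ) := by
  rw [Submodule.coe_inf]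
  exact hW.inter_inter (mapsTo_genEigenspace_of_comm hst μ 1)

end Module.End

namespace LinearMap.BilinForm

variable {B : LinearMap.BilinForm K V}

theorem apply_eq_zero_of_mem_eigenspace {s : End K V} (hsB : ∀ v w, B (s v) (s w) = B v w)
    {μ ν : K} (hμν : μ * ν ≠ 1) {x y : V} (hx : x ∈ s.eigenspace μ) (hy : y ∈ s.eigenspace ν) :
    B x y = 0 := by
  have h := hsB x y
  rw [mem_eigenspace_iff.mp hx, mem_eigenspace_iff.mp hy] at h
  simp only [map_smul, LinearMap.smul_apply, smul_eq_mul] at h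
  have : (μ * ν - 1) * B x y = 0 := by linear_combination h
  exact (mul_eq_zero.mp this).resolve_left (sub_ne_zero.mpr hμν)

theorem disjoint_orthogonal_of_sup_eq {P Q W : Submodule K V}
    (hW : Disjoint W (B.orthogonal W)) (hPQ : P ⊔ Q = W) (hQP : ∀ x ∈ Q, ∀ y ∈ P, B x y = 0) :
    Disjoint P (B.orthogonal P) := by
  rw [Submodule.disjoint_def] at hW ⊢
  intro x hxP hxorth
  refine hW x (hPQ ▸ Submodule.mem_sup_left hxP) ?_
  rw [← hPQ, mem_orthogonal_iff]
  intro n hn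
  obtain ⟨p, hp, q, hq, rfl⟩ := Submodule.mem_sup.mp hn
  rw [map_add, LinearMap.add_apply, hxorth p hp, hQP q hq x hxP, add_zero]

theorem IsAlt.two_le_finrank [FiniteDimensional K V] (hB : B.IsAlt) {W : Submodule K V}
    (hW : Disjoint W (B.orthogonal W)) (hW0 : W ≠ ⊥) : 2 ≤ finrank K W := by
  have hpos : finrank K W ≠ 0 := fun h => hW0 (Submodule.finrank_eq_zero.mp h)
  refine (Nat.two_le_iff _).mpr ⟨hpos, fun h1 => ?_⟩
  obtain ⟨v, hv0, hspan⟩ := finrank_eq_one_iff'.mp h1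
  refine hv0 (Subtype.ext (Submodule.disjoint_def.mp hW v v.2 ?_))
  intro n hn
  obtain ⟨c, hc⟩ := hspan ⟨n, hn⟩
  change B (⟨n, hn⟩ : W) v = 0
  rw [← congrArg Subtype.val hc, Submodule.coe_smul, map_smul, LinearMap.smul_apply, hB,
    smul_zero]

end LinearMap.BilinForm

section Restrictions

variable (S : Set (End K V))

def restrictions (W : Submodule K V) : Set (W → V) :=
  (fun s : End K V => (W : Set V).domRestrict s) '' S

theorem encard_restrictions_sup_le (P Q : Submodule K V) :
    (restrictions S (P ⊔ Q)).encard ≤ (restrictions S P).encard * (restrictions S Q).encard :=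
  encard_image_le_encard_image_mul fun s _ t _ hP hQ => by
    rw [domRestrict_eq_domRestrict_iff] at hP hQ ⊢
    exact LinearMap.eqOn_sup hP hQ

theorem encard_restrictions_bot_le_one : (restrictions S ⊥).encard ≤ 1 := by
  refine encard_le_one_iff.mpr ?_
  rintro _ _ ⟨s, -, rfl⟩ ⟨t, -, rfl⟩
  rw [domRestrict_eq_domRestrict_iff]
  intro x hx
  rw [(Submodule.mem_bot K).mp hx, map_zero, map_zero]

theorem encard_restrictions_le_two {W : Submodule K V}
    (hS : ∀ s ∈ S, W ≤ s.eigenspace 1 ∨ W ≤ s.eigenspace (-1)) :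
    (restrictions S W).encard ≤ 2 := by
  have hsub : restrictions S W ⊆
      {(W : Set V).domRestrict id, (W : Set V).domRestrict Neg.neg} := by
    rintro _ ⟨s, hs, rfl⟩
    rcases hS s hs with h | h
    · refine Or.inl (domRestrict_eq_domRestrict_iff.mpr fun x hx => ?_)
      rw [mem_eigenspace_iff.mp (h hx), one_smul, id]
    · refine Or.inr (domRestrict_eq_domRestrict_iff.mpr fun x hx => ?_)
      rw [mem_eigenspace_iff.mp (h hx), neg_one_smul]
  exact (encard_le_encard hsub).trans
    ((encard_insert_le _ _).trans (by simp [one_add_one_eq_two]))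

end Restrictions

open LinearMap.BilinForm in
theorem encard_restrictions_le [NeZero (2 : K)] [FiniteDimensional K V]
    {B : LinearMap.BilinForm K V} (hB : B.IsAlt) {S : Set (End K V)}
    (hS2 : ∀ s ∈ S, s * s = 1) (hSc : ∀ s ∈ S, ∀ t ∈ S, Commute s t)
    (hSB : ∀ s ∈ S, ∀ v w, B (s v) (s w) = B v w) (W : Submodule K V)
    (hWS : ∀ s ∈ S, MapsTo s W W) (hW : Disjoint W (B.orthogonal W)) :
    (restrictions S W).encard ≤ 2 ^ (finrank K W / 2) := by
  induction hn : finrank K W using Nat.strong_induction_on generalizing W with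
  | _ n ih =>
  by_cases hsplit : ∃ s ∈ S, ¬ W ≤ s.eigenspace 1 ∧ ¬ W ≤ s.eigenspace (-1)
  · obtain ⟨s, hs, hW₁, hW₂⟩ := hsplit
    have hPQ := inf_eigenspace_one_sup_inf_eigenspace_neg_one (hS2 s hs) (hWS s hs)
    have hdim :=
      finrank_inf_eigenspace_one_add_finrank_inf_eigenspace_neg_one (hS2 s hs) (hWS s hs)
    have hpiece (μ : K) (hμ : ¬ W ≤ s.eigenspace μ)
        (hd : Disjoint (W ⊓ s.eigenspace μ) (B.orthogonal (W ⊓ s.eigenspace μ))) :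
        (restrictions S (W ⊓ s.eigenspace μ)).encard ≤
          2 ^ (finrank K ↥(W ⊓ s.eigenspace μ) / 2) :=
      ih _ (hn ▸ Submodule.finrank_lt_finrank_of_lt
          (inf_le_left.lt_of_ne fun h => hμ (h ▸ inf_le_right))) _
        (fun t ht => mapsTo_inf_eigenspace_of_comm (hSc s hs t ht) (hWS t ht) μ) hd rfl
    have hne : (-1 : K) ≠ 1 := neg_one_ne_one_of_neZero_two
    have horth₁ := disjoint_orthogonal_of_sup_eq hW hPQ fun x hx y hy =>
      apply_eq_zero_of_mem_eigenspace (hSB s hs) (by simpa using hne) hx.2 hy.2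
    have horth₂ := disjoint_orthogonal_of_sup_eq hW ((sup_comm _ _).trans hPQ) fun x hx y hy =>
      apply_eq_zero_of_mem_eigenspace (hSB s hs) (by simpa using hne) hx.2 hy.2
    calc (restrictions S W).encard
        = (restrictions S (W ⊓ s.eigenspace 1 ⊔ W ⊓ s.eigenspace (-1))).encard := by rw [hPQ]
      _ ≤ (restrictions S (W ⊓ s.eigenspace 1)).encard *
            (restrictions S (W ⊓ s.eigenspace (-1))).encard := encard_restrictions_sup_le S _ _
      _ ≤ 2 ^ (finrank K ↥(W ⊓ s.eigenspace 1) / 2) *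
            2 ^ (finrank K ↥(W ⊓ s.eigenspace (-1)) / 2) :=
        mul_le_mul' (hpiece 1 hW₁ horth₁) (hpiece (-1) hW₂ horth₂)
      _ ≤ 2 ^ (n / 2) := by
        rw [← pow_add]; exact pow_le_pow_right₀ one_le_two (by omega)
  · push Not at hsplit
    by_cases hW0 : W = ⊥
    · subst hW0
      exact (encard_restrictions_bot_le_one S).trans (one_le_pow₀ one_le_two)
    · calc (restrictions S W).encard ≤ 2 ^ 1 := (encard_restrictions_le_two S fun s hs =>
            or_iff_not_imp_left.mpr (hsplit s hs)).trans_eq (pow_one _).symm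
        _ ≤ 2 ^ (n / 2) :=
          pow_le_pow_right₀ one_le_two (by have := hB.two_le_finrank hW hW0; omega)

theorem finite_and_card_le_of_sq_eq_one [NeZero (2 : K)] [FiniteDimensional K V]
    {B : LinearMap.BilinForm K V} (hB : B.IsAlt) (hBnd : B.Nondegenerate) {G : Type*} [Group G]
    (hG : ∀ g : G, g ^ 2 = 1) (ρ : G →* End K V) (hρ : Function.Injective ρ)
    (hρB : ∀ g v w, B (ρ g v) (ρ g w) = B v w) :
    Finite G ∧ Nat.card G ≤ 2 ^ (finrank K V / 2) := by
  have hcomm : ∀ a b : G, Commute a b :=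
    Commute.of_orderOf_dvd_two fun g => orderOf_dvd_of_pow_eq_one (hG g)
  have hbound := encard_restrictions_le hB (S := range ρ)
    (by rintro _ ⟨g, rfl⟩; rw [← map_mul, ← sq, hG, map_one])
    (by rintro _ ⟨a, rfl⟩ _ ⟨b, rfl⟩; exact (hcomm a b).map ρ)
    (by rintro _ ⟨g, rfl⟩; exact hρB g) ⊤ (fun _ _ => mapsTo_univ _ _)
    (by rw [LinearMap.BilinForm.orthogonal_top_eq_bot hBnd]; exact disjoint_bot_right)
  have hres : Function.Injective fun g => ((⊤ : Submodule K V) : Set V).domRestrict (ρ g) :=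
    fun a b h => hρ (LinearMap.ext fun v => congrFun h ⟨v, trivial⟩)
  have hcard : ENat.card G ≤ (2 ^ (finrank K V / 2) : ℕ) := by
    push_cast
    calc ENat.card G ≤ (restrictions (range ρ) ⊤).encard := by
          rw [restrictions, ← range_comp]; exact hres.encard_range
      _ ≤ _ := by rwa [finrank_top] at hbound
  have : Finite G := ENat.card_lt_top.mp (hcard.trans_lt (ENat.natCast_lt_top _))
  refine ⟨this, ?_⟩
  rw [ENat.card_eq_coe_natCard] at hcard
  exact_mod_cast hcard

namespace Matrix

variable {l R : Type*} [DecidableEq l] [Fintype l] [CommRing R]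

theorem isAlt_toBilin'_J : (J l R).toBilin'.IsAlt := by
  intro v
  rw [toBilin'_apply', ← Sum.elim_comp_inl_inr v, J, fromBlocks_mulVec,
    sumElim_dotProduct_sumElim]
  simp [dotProduct_comm, neg_mulVec]

theorem toBilin'_J_mulVec_mulVec {A : Matrix (l ⊕ l) (l ⊕ l) R} (hA : A ∈ symplecticGroup l R)
    (v w : l ⊕ l → R) : (J l R).toBilin' (A *ᵥ v) (A *ᵥ w) = (J l R).toBilin' v w := by
  rw [toBilin'_apply', toBilin'_apply', dotProduct_mulVec, vecMul_mulVec, ← dotProduct_mulVec,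
    mulVec_mulVec, (SymplecticGroup.mem_iff').mp hA]

end Matrix

theorem exponent_two_subgroup_of_symplectic_general
    (g : ℕ)
    (Z : Subgroup ↥(Matrix.symplecticGroup (Fin g) ℚ_[2]))
    (hZ : ∀ z : Z, z ^ 2 = 1) :
    Finite Z ∧ (∀ a b : Z, a * b = b * a) ∧ Nat.card Z ≤ 2 ^ g := by
  let ρ : Z →* End ℚ_[2] (Fin g ⊕ Fin g → ℚ_[2]) := Matrix.toLinAlgEquiv'.toMonoidHom.comp
    ((Matrix.symplecticGroup (Fin g) ℚ_[2]).subtype.comp Z.subtype)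
  have hρ : Function.Injective ρ := Matrix.toLinAlgEquiv'.injective.comp
    (Subtype.val_injective.comp Subtype.val_injective)
  have hnd := LinearMap.BilinForm.nondegenerate_toBilin'_of_det_ne_zero' _
    (Matrix.isUnit_det_J (Fin g) ℚ_[2]).ne_zero
  obtain ⟨hfin, hcard⟩ := finite_and_card_le_of_sq_eq_one Matrix.isAlt_toBilin'_J hnd hZ ρ hρ
    fun z => Matrix.toBilin'_J_mulVec_mulVec z.1.2
  refine ⟨hfin, fun a b =>
    (Commute.of_orderOf_dvd_two (fun z => orderOf_dvd_of_pow_eq_one (hZ z)) a b).eq, ?_⟩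
  simpa [← two_mul] using hcard

/-- a subgroup `Z` of `Sp_{2g}(ℚ₂)` all of whose elements have order
dividing `2` is a finite elementary abelian `2`-group of order at most `2^g`. -/
theorem exponent_two_subgroup_of_symplectic
    (g : ℕ) (hg : 0 < g)
    (Z : Subgroup ↥(Matrix.symplecticGroup (Fin g) ℚ_[2]))
    (hZ : ∀ z : Z, z ^ 2 = 1) :
    Finite Z ∧ (∀ a b : Z, a * b = b * a) ∧ Nat.card Z ≤ 2 ^ g :=
  exponent_two_subgroup_of_symplectic_general g Z hZ
end

section
/- (Minkowski–Serre Lemma over ℤ₂.) Let T be a free module of finite rank over the ring ℤ₂ of 2-adic integers, and let u be a ℤ₂-linear automorphism of T of finite order such that u(x) ≡ x (mod 2T) for all x ∈ T. Then u² = id; in particular, u has order 1 or 2. -/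
/-!
Write `u = 1 + 2v` in `End T`, so that `u² = 1 + 4s` with `s = v + v²`; it suffices to show that
an element `g = 1 + 4s` of finite order is `1`. Passing to a power of `g`, which is again of this
form, we may assume `g` has prime order `q`. Then
`0 = g^q - 1 = (1 + g + ⋯ + g^(q-1)) (g - 1) = (q + 4t) · 4s`. Every `1 + 2t` is invertible in
`End T` (it is the identity mod 2, hence surjective by Nakayama, hence bijective), so `q + 4t`
is a unit for odd `q` and twice a unit for `q = 2`; as `End T` has no 2-torsion, `s = 0`.
-/

open Finset

namespace Module.End

variable {R M : Type*} [CommRing R] [AddCommGroup M] [Module R M]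

lemma isLeftRegular_algebraMap {r : R} (hr : IsSMulRegular M r) :
    IsLeftRegular (algebraMap R (Module.End R M) r) := by
  intro f g hfg
  ext x
  exact hr (by simpa using LinearMap.congr_fun hfg x)

lemma isUnit_one_add_algebraMap_mul [Module.Finite R M] {r : R}
    (hr : r ∈ (⊥ : Ideal R).jacobson) (t : Module.End R M) :
    IsUnit (1 + algebraMap R (Module.End R M) r * t) := by
  rw [Module.End.isUnit_iff]
  apply OrzechProperty.bijective_of_surjective_endomorphism
  apply LinearMap.surjective_of_surjective_comp_mkQ _ _
    ((Ideal.span_singleton_le_iff_mem _).mpr hr)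
  set N := Ideal.span {r} • (⊤ : Submodule R M)
  have hmod : N.mkQ ∘ₗ (1 + algebraMap R (Module.End R M) r * t) = N.mkQ := by
    ext x
    have : r • t x ∈ N := Submodule.smul_mem_smul (Ideal.mem_span_singleton_self r) trivial
    simpa [← Submodule.Quotient.mk_smul, Submodule.Quotient.mk_eq_zero] using this
  rw [hmod]
  exact N.mkQ_surjective

end Module.End

lemma Module.Free.exists_linearMap_eq_smul {R M N : Type*} [CommRing R] [AddCommGroup M]
    [Module R M] [AddCommGroup N] [Module R N] [Module.Free R M] (r : R) (f : M →ₗ[R] N)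
    (hf : ∀ x, ∃ y, f x = r • y) : ∃ g : M →ₗ[R] N, f = r • g := by
  choose g hg using hf
  let b := Module.Free.chooseBasis R M
  exact ⟨b.constr R (fun i => g (b i)), b.ext fun i => by simp [b.constr_basis, hg]⟩

section Ring

variable {A : Type*} [Ring A]

lemma exists_one_add_four_mul_pow_eq (s : A) (n : ℕ) :
    ∃ t : A, (1 + 4 * s) ^ n = 1 + 4 * t := by
  induction n with
  | zero => exact ⟨0, by simp⟩
  | succ n ih =>
    obtain ⟨t, ht⟩ := ih
    exact ⟨t + s + 4 * (t * s), by rw [pow_succ, ht]; noncomm_ring⟩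

lemma exists_geom_sum_one_add_four_mul_eq (s : A) (n : ℕ) :
    ∃ t : A, ∑ i ∈ range n, (1 + 4 * s) ^ i = n + 4 * t := by
  induction n with
  | zero => exact ⟨0, by simp⟩
  | succ n ih =>
    obtain ⟨t, ht⟩ := ih
    obtain ⟨t', ht'⟩ := exists_one_add_four_mul_pow_eq s n
    exact ⟨t + t', by rw [sum_range_succ, ht, ht']; push_cast; noncomm_ring⟩

lemma eq_zero_of_one_add_four_mul_pow_prime_eq_one (h2 : IsLeftRegular (2 : A))
    (hunit : ∀ t : A, IsUnit (1 + 2 * t)) {q : ℕ} (hq : q.Prime) {s : A}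
    (h : (1 + 4 * s) ^ q = 1) : s = 0 := by
  have h2' := isLeftRegular_iff_right_eq_zero_of_mul.mp h2
  obtain ⟨t, ht⟩ := exists_geom_sum_one_add_four_mul_eq s q
  have hq0 : (q + 4 * t) * (4 * s) = 0 := by
    simpa [h, ht] using geom_sum_mul (1 + 4 * s) q
  have hqs : (q + 4 * t) * s = 0 := by
    refine h2' _ (h2' _ ?_)
    rw [← hq0]; noncomm_ring
  rcases hq.eq_two_or_odd' with rfl | ⟨m, rfl⟩
  · refine (hunit t).mul_right_eq_zero.mp (h2' _ ?_)
    rw [← hqs]; push_cast; noncomm_ring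
  · refine (hunit (m + 2 * t)).mul_right_eq_zero.mp ?_
    rw [← hqs]; push_cast; noncomm_ring

lemma one_add_four_mul_eq_one_of_pow_eq_one (h2 : IsLeftRegular (2 : A))
    (hunit : ∀ t : A, IsUnit (1 + 2 * t)) {n : ℕ} (hn : n ≠ 0) {s : A}
    (h : (1 + 4 * s) ^ n = 1) : 1 + 4 * s = 1 := by
  induction n using Nat.strong_induction_on generalizing s with
  | _ n ih =>
    obtain rfl | hn1 := eq_or_ne n 1
    · simpa using h
    obtain ⟨q, hq, m, rfl⟩ := Nat.exists_prime_and_dvd hn1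
    have hm : m ≠ 0 := right_ne_zero_of_mul hn
    obtain ⟨t, ht⟩ := exists_one_add_four_mul_pow_eq s m
    have ht0 : t = 0 := eq_zero_of_one_add_four_mul_pow_prime_eq_one h2 hunit hq
      (by rw [← ht, ← pow_mul, mul_comm, h])
    have hsm : (1 + 4 * s) ^ m = 1 := by simp [ht, ht0]
    exact ih m (lt_mul_left (Nat.pos_of_ne_zero hm) hq.one_lt) hm hsm

lemma one_add_two_mul_sq_eq_one_of_isOfFinOrder (h2 : IsLeftRegular (2 : A))
    (hunit : ∀ t : A, IsUnit (1 + 2 * t)) {v : A} (h : IsOfFinOrder (1 + 2 * v)) :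
    (1 + 2 * v) ^ 2 = 1 := by
  obtain ⟨n, hn, hvn⟩ := isOfFinOrder_iff_pow_eq_one.mp h
  have hsq : (1 + 2 * v) ^ 2 = 1 + 4 * (v + v * v) := by noncomm_ring
  rw [hsq]
  exact one_add_four_mul_eq_one_of_pow_eq_one h2 hunit hn.ne'
    (by rw [← hsq, ← pow_mul, mul_comm, pow_mul, hvn, one_pow])

end Ring

theorem LinearEquiv.sq_eq_one_of_isOfFinOrder {R M : Type*} [CommRing R] [AddCommGroup M]
    [Module R M] [Module.Free R M] [Module.Finite R M]
    (h2R : (2 : R) ∈ (⊥ : Ideal R).jacobson) (h2M : IsSMulRegular M (2 : R))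
    {u : M ≃ₗ[R] M} (hfin : IsOfFinOrder u) (hcong : ∀ x, ∃ y, u x - x = (2 : R) • y) :
    u ^ 2 = 1 := by
  let toEnd := LinearEquiv.automorphismGroup.toLinearMapMonoidHom (R := R) (M := M)
  obtain ⟨v, hv⟩ := Module.Free.exists_linearMap_eq_smul (2 : R) (toEnd u - 1)
    hcong
  have hu : toEnd u = 1 + 2 * v := by
    rw [← sub_eq_iff_eq_add', hv, ← map_ofNat (algebraMap R (Module.End R M)), Algebra.smul_def]
  have hsq : toEnd u ^ 2 = 1 := by
    have hfin' := toEnd.isOfFinOrder hfin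
    rw [hu] at hfin' ⊢
    refine one_add_two_mul_sq_eq_one_of_isOfFinOrder ?_ (fun t => ?_) hfin'
    · simpa [map_ofNat] using Module.End.isLeftRegular_algebraMap h2M
    · simpa [map_ofNat] using Module.End.isUnit_one_add_algebraMap_mul h2R t
  apply LinearEquiv.toLinearMap_injective
  change toEnd (u ^ 2) = toEnd 1
  rw [map_pow, map_one, hsq]

/-- Minkowski–Serre over `ℤ₂`: a finite-order `ℤ₂`-linear automorphism
`u` of a free `ℤ₂`-module `T` of finite rank with `u(x) ≡ x (mod 2T)` for all `x`
satisfies `u² = id`. -/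
theorem minkowski_serre_two_adic
    (T : Type) [AddCommGroup T] [Module ℤ_[2] T]
    [Module.Free ℤ_[2] T] [Module.Finite ℤ_[2] T]
    (u : T ≃ₗ[ℤ_[2]] T) (hfin : IsOfFinOrder u)
    (hcong : ∀ x : T, ∃ y : T, u x - x = (2 : ℤ_[2]) • y) :
    u * u = 1 := by
  have two_mem_jacobson : (2 : ℤ_[2]) ∈ (⊥ : Ideal ℤ_[2]).jacobson := by
    rw [IsLocalRing.jacobson_eq_maximalIdeal _ bot_ne_top]
    exact_mod_cast PadicInt.p_nonunit (p := 2)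
  rw [← sq]
  exact LinearEquiv.sq_eq_one_of_isOfFinOrder two_mem_jacobson
    (IsSMulRegular.of_ne_zero two_ne_zero) hfin hcong
end
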